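/- arXiv:1010.1186 — 3 statements merged into one kernel-verified Lean document; each statement's English description precedes it below -/
import Mathlib

section
/- Let τ be a regular Borel measure on ℝⁿ that is homogeneous of degree a ≥ 0 with respect to a system of dilations ε_t on ℝⁿ (i.e., τ(ε_t(A)) = t^a τ(A) for every Borel set A and every t > 0, where ε_t(λ₁,...,λₙ) = (t^{w₁}λ₁,...,t^{wₙ}λₙ) with weights w_j ≥ 1 and a > 0). Then τ is locally 1-bounded on ℝⁿ \ {0}: for every compact K ⊆ ℝⁿ \ {0} and every 0 ≤ γ < 1, there exist C, r̄ > 0 such that τ(B(λ,r)) ≤ C r^γ for all λ ∈ K and 0 < r ≤ r̄. -/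
/-!
Dilating the ball `B(λ, r)` by the parameters `t_k = 1 + kδ ∈ [1, 2]`, with `δ ≍ r / ‖λ‖`,
produces about `1/δ` sets, each of measure at least `τ(B(λ, r))` by homogeneity, all
contained in a fixed compact set. They are pairwise disjoint because `ε_t` moves `λ` by at
least `(t - s)‖λ‖` relative to `ε_s` (all weights are `≥ 1`), while moving the ball only
`O(r)`. Hence `τ(B(λ, r)) ≲ δ ≍ r`, which is even better than `r^γ` for `r ≤ 1`.
-/

open MeasureTheory Metric Set
open scoped ENNReal

theorem MeasureTheory.Measure.card_mul_le_of_pairwiseDisjoint {α β : Type*}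
    [MeasurableSpace α] (μ : Measure α) {t : Finset β} {s : β → Set α} {S : Set α} {m : ℝ≥0∞}
    (hd : (t : Set β).PairwiseDisjoint s) (hs : ∀ i ∈ t, MeasurableSet (s i))
    (hS : ∀ i ∈ t, s i ⊆ S) (hm : ∀ i ∈ t, m ≤ μ (s i)) :
    t.card * m ≤ μ S :=
  calc (t.card : ℝ≥0∞) * m = ∑ _ ∈ t, m := by rw [Finset.sum_const, nsmul_eq_mul]
    _ ≤ ∑ i ∈ t, μ (s i) := Finset.sum_le_sum hm
    _ = μ (⋃ i ∈ t, s i) := (measure_biUnion_finset hd hs).symm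
    _ ≤ μ S := measure_mono (iUnion₂_subset hS)

theorem Real.sub_le_rpow_sub_rpow {w s t : ℝ} (hw : 1 ≤ w) (hs : 1 ≤ s) (hst : s ≤ t) :
    t - s ≤ t ^ w - s ^ w := by
  have hs1 : 1 ≤ s ^ (w - 1) := Real.one_le_rpow hs (by linarith)
  have hst1 : s ^ (w - 1) ≤ t ^ (w - 1) := Real.rpow_le_rpow (by linarith) hst (by linarith)
  have hpow : ∀ u : ℝ, 0 < u → u ^ w = u * u ^ (w - 1) := fun u hu => by
    rw [← Real.rpow_one_add' hu.le (by linarith), add_sub_cancel]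
  rw [hpow t (by linarith), hpow s (by linarith)]
  nlinarith

theorem EuclideanSpace.norm_le_norm_of_forall_abs_le {ι : Type*} [Fintype ι]
    {x y : EuclideanSpace ℝ ι} (h : ∀ i, |x i| ≤ |y i|) : ‖x‖ ≤ ‖y‖ := by
  rw [EuclideanSpace.norm_eq, EuclideanSpace.norm_eq]
  gcongr with i
  exact h i

section Dilation

variable {ι : Type*}

noncomputable def dilation (w : ι → ℝ) (t : ℝ) (x : EuclideanSpace ℝ ι) : EuclideanSpace ℝ ι :=
  WithLp.toLp 2 (fun i => t ^ w i * x i)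

def IsHomogeneous (τ : Measure (EuclideanSpace ℝ ι)) (w : ι → ℝ) (a : ℝ) : Prop :=
  ∀ A, MeasurableSet A → ∀ t : ℝ, 0 < t → τ (dilation w t '' A) = ENNReal.ofReal (t ^ a) * τ A

variable {w : ι → ℝ} {s t M : ℝ}

@[simp]
theorem dilation_apply (x : EuclideanSpace ℝ ι) (i : ι) : dilation w t x i = t ^ w i * x i :=
  rfl

theorem dilation_sub (x y : EuclideanSpace ℝ ι) :
    dilation w t x - dilation w t y = dilation w t (x - y) := by
  ext i
  simp [mul_sub]

theorem continuous_dilation : Continuous (dilation (ι := ι) w t) := by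
  unfold dilation
  fun_prop

theorem dilation_injective (ht : 0 < t) : Function.Injective (dilation (ι := ι) w t) :=
  fun x y hxy => by
    ext i
    exact mul_left_cancel₀ (Real.rpow_pos_of_pos ht (w i)).ne' (congrArg (· i) hxy)

theorem MeasurableSet.image_dilation [Fintype ι] (ht : 0 < t) {A : Set (EuclideanSpace ℝ ι)}
    (hA : MeasurableSet A) : MeasurableSet (dilation w t '' A) :=
  hA.image_of_continuousOn_injOn continuous_dilation.continuousOn (dilation_injective ht).injOn

theorem norm_dilation_le [Fintype ι] (hM : 0 ≤ M) (ht : ∀ i, |t ^ w i| ≤ M)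
    (x : EuclideanSpace ℝ ι) : ‖dilation w t x‖ ≤ M * ‖x‖ :=
  calc ‖dilation w t x‖ ≤ ‖M • x‖ := EuclideanSpace.norm_le_norm_of_forall_abs_le fun i => by
        simp only [dilation_apply, PiLp.smul_apply, smul_eq_mul, abs_mul, abs_of_nonneg hM]
        gcongr
        exact ht i
    _ = M * ‖x‖ := by rw [norm_smul, Real.norm_of_nonneg hM]

theorem exists_norm_dilation_le [Fintype ι] (hw : ∀ i, 0 ≤ w i) :
    ∃ M, 0 < M ∧ ∀ t ∈ Icc (1 : ℝ) 2, ∀ x : EuclideanSpace ℝ ι, ‖dilation w t x‖ ≤ M * ‖x‖ := by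
  obtain ⟨M, hM⟩ := Finite.bddAbove_range fun i => (2 : ℝ) ^ w i
  refine ⟨max M 1, by positivity, fun t ht => norm_dilation_le (by positivity) fun i => ?_⟩
  rw [abs_of_nonneg (Real.rpow_nonneg (by linarith [ht.1]) _)]
  exact (Real.rpow_le_rpow (by linarith [ht.1]) ht.2 (hw i)).trans
    ((hM ⟨i, rfl⟩).trans (le_max_left _ _))

theorem norm_dilation_sub_dilation_ge [Fintype ι] (hw : ∀ i, 1 ≤ w i) (hs : 1 ≤ s) (hst : s ≤ t)
    (x : EuclideanSpace ℝ ι) : (t - s) * ‖x‖ ≤ ‖dilation w t x - dilation w s x‖ :=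
  calc (t - s) * ‖x‖ = ‖(t - s) • x‖ := by rw [norm_smul, Real.norm_of_nonneg (by linarith)]
    _ ≤ _ := EuclideanSpace.norm_le_norm_of_forall_abs_le fun i => by
        simp only [PiLp.smul_apply, PiLp.sub_apply, dilation_apply, smul_eq_mul, ← sub_mul,
          abs_mul]
        have hsub := Real.sub_le_rpow_sub_rpow (hw i) hs hst
        rw [abs_of_nonneg (sub_nonneg.2 hst), abs_of_nonneg ((sub_nonneg.2 hst).trans hsub)]
        gcongr

theorem disjoint_image_dilation_ball [Fintype ι] (hw : ∀ i, 1 ≤ w i) (hM0 : 0 < M)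
    (hM : ∀ t ∈ Icc (1 : ℝ) 2, ∀ x : EuclideanSpace ℝ ι, ‖dilation w t x‖ ≤ M * ‖x‖)
    (hs : s ∈ Icc (1 : ℝ) 2) (ht : t ∈ Icc (1 : ℝ) 2) (hst : s ≤ t)
    {c : EuclideanSpace ℝ ι} {r : ℝ} (hsep : 2 * M * r ≤ (t - s) * ‖c‖) :
    Disjoint (dilation w s '' ball c r) (dilation w t '' ball c r) := by
  rw [Set.disjoint_left]
  rintro _ ⟨x, hx, rfl⟩ ⟨y, hy, hyx⟩
  have hx' : ‖x - c‖ < r := mem_ball_iff_norm.1 hx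
  have hy' : ‖c - y‖ < r := mem_ball_iff_norm'.1 hy
  have hmove : ‖dilation w t c - dilation w s c‖ < 2 * M * r :=
    calc ‖dilation w t c - dilation w s c‖
        = ‖dilation w t (c - y) + dilation w s (x - c)‖ := by
          rw [← dilation_sub, ← dilation_sub, hyx]
          abel_nf
      _ ≤ M * ‖c - y‖ + M * ‖x - c‖ :=
          (norm_add_le _ _).trans (add_le_add (hM t ht _) (hM s hs _))
      _ < 2 * M * r := by nlinarith
  linarith [norm_dilation_sub_dilation_ge hw hs.1 hst c]

variable {τ : Measure (EuclideanSpace ℝ ι)} {a : ℝ}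

theorem IsHomogeneous.measure_le_measure_image_dilation (hτ : IsHomogeneous τ w a)
    (ha : 0 ≤ a) (ht : 1 ≤ t) {A : Set (EuclideanSpace ℝ ι)} (hA : MeasurableSet A) :
    τ A ≤ τ (dilation w t '' A) := by
  rw [hτ A hA t (by linarith)]
  exact le_mul_of_one_le_left' (ENNReal.one_le_ofReal.2 (Real.one_le_rpow ht ha))

theorem IsHomogeneous.measure_ball_le [Fintype ι] (hτ : IsHomogeneous τ w a) (ha : 0 ≤ a)
    (hw : ∀ i, 1 ≤ w i) (hM0 : 0 < M)
    (hM : ∀ t ∈ Icc (1 : ℝ) 2, ∀ x : EuclideanSpace ℝ ι, ‖dilation w t x‖ ≤ M * ‖x‖)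
    {c : EuclideanSpace ℝ ι} {r δ : ℝ} (hδ : 0 < δ) (hsep : 2 * M * r ≤ δ * ‖c‖)
    {S : Set (EuclideanSpace ℝ ι)} (hS : ∀ t ∈ Icc (1 : ℝ) 2, dilation w t '' ball c r ⊆ S) :
    τ (ball c r) ≤ ENNReal.ofReal δ * τ S := by
  set N := ⌊δ⁻¹⌋₊ + 1
  set T : ℕ → ℝ := fun k => 1 + k * δ
  have hT : ∀ k ∈ Finset.range N, T k ∈ Icc (1 : ℝ) 2 := by
    intro k hk
    have hkN : (k : ℝ) ≤ δ⁻¹ := (Nat.cast_le.2 (Nat.lt_succ_iff.1 (Finset.mem_range.1 hk))).trans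
      (Nat.floor_le (by positivity))
    have hkδ : k * δ ≤ 1 :=
      calc k * δ ≤ δ⁻¹ * δ := by gcongr
        _ = 1 := inv_mul_cancel₀ hδ.ne'
    constructor <;> simp only [T] <;> nlinarith
  have hdisj : (Finset.range N : Set ℕ).PairwiseDisjoint fun k => dilation w (T k) '' ball c r := by
    intro k hk j hj hkj
    wlog hlt : k < j generalizing k j
    · exact (this hj hk hkj.symm (hkj.lt_or_gt.resolve_left hlt)).symm
    have hgap : δ ≤ T j - T k := by
      have hkj' : (k : ℝ) + 1 ≤ j := by exact_mod_cast hlt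
      simp only [T]
      nlinarith
    exact disjoint_image_dilation_ball hw hM0 hM (hT k hk) (hT j hj) (by linarith)
      (hsep.trans (mul_le_mul_of_nonneg_right hgap (norm_nonneg c)))
  have hcount : (N : ℝ≥0∞) * τ (ball c r) ≤ τ S := by
    simpa using τ.card_mul_le_of_pairwiseDisjoint hdisj
      (fun k _ => isOpen_ball.measurableSet.image_dilation (by linarith [(hT k ‹_›).1]))
      (fun k hk => hS _ (hT k hk))
      (fun k hk => hτ.measure_le_measure_image_dilation ha (hT k hk).1 isOpen_ball.measurableSet)
  have hN : (N : ℝ≥0∞)⁻¹ ≤ ENNReal.ofReal δ := by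
    rw [← ENNReal.ofReal_natCast, ← ENNReal.ofReal_inv_of_pos (by positivity)]
    have hδN : δ⁻¹ ≤ N := by exact_mod_cast (Nat.lt_floor_add_one δ⁻¹).le
    exact ENNReal.ofReal_le_ofReal (inv_le_of_inv_le₀ hδ hδN)
  calc τ (ball c r) = (N : ℝ≥0∞)⁻¹ * (N * τ (ball c r)) :=
        (ENNReal.inv_mul_cancel_left (by simp [N]) (ENNReal.natCast_ne_top N)).symm
    _ ≤ ENNReal.ofReal δ * τ S := mul_le_mul' hN hcount

theorem image_dilation_ball_subset_closedBall [Fintype ι]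
    (hM : ∀ t ∈ Icc (1 : ℝ) 2, ∀ x : EuclideanSpace ℝ ι, ‖dilation w t x‖ ≤ M * ‖x‖)
    (hM0 : 0 ≤ M) (ht : t ∈ Icc (1 : ℝ) 2) {c : EuclideanSpace ℝ ι} {r R : ℝ} (hc : ‖c‖ ≤ R)
    (hr : r ≤ 1) : dilation w t '' ball c r ⊆ closedBall 0 (M * (R + 1)) := by
  rintro _ ⟨x, hx, rfl⟩
  have hx : ‖x‖ ≤ R + 1 := by
    linarith [norm_le_norm_add_norm_sub' x c, mem_ball_iff_norm.1 hx]
  exact mem_closedBall_zero_iff.2 ((hM t ht x).trans (by gcongr))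

theorem IsHomogeneous.exists_measure_ball_le [Fintype ι] [IsFiniteMeasureOnCompacts τ]
    (hτ : IsHomogeneous τ w a) (ha : 0 ≤ a) (hw : ∀ i, 1 ≤ w i)
    {K : Set (EuclideanSpace ℝ ι)} (hK : IsCompact K) (hK0 : K ⊆ {0}ᶜ) :
    ∃ C : ℝ, 0 < C ∧ ∀ c ∈ K, ∀ r : ℝ, 0 < r → r ≤ 1 →
      τ (ball c r) ≤ ENNReal.ofReal (C * r) := by
  rcases K.eq_empty_or_nonempty with rfl | hKne
  · exact ⟨1, one_pos, by simp⟩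
  obtain ⟨M, hM0, hM⟩ := exists_norm_dilation_le fun i => zero_le_one.trans (hw i)
  obtain ⟨c₀, hc₀K, hc₀min⟩ := hK.exists_isMinOn hKne continuous_norm.continuousOn
  have hρ : 0 < ‖c₀‖ := norm_pos_iff.2 (hK0 hc₀K)
  obtain ⟨R, hR⟩ := hK.isBounded.subset_closedBall 0
  set S := closedBall (0 : EuclideanSpace ℝ ι) (M * (R + 1))
  have hSfin : τ S ≠ ⊤ := (isCompact_closedBall _ _).measure_lt_top.ne
  refine ⟨2 * M * (τ S).toReal / ‖c₀‖ + 1, by positivity, fun c hc r hr hr1 => ?_⟩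
  have hsep : 2 * M * r ≤ 2 * M * r / ‖c₀‖ * ‖c‖ := by
    rw [div_mul_eq_mul_div, le_div_iff₀ hρ]
    exact mul_le_mul_of_nonneg_left (hc₀min hc) (by positivity)
  have hS t (ht : t ∈ Icc (1 : ℝ) 2) : dilation w t '' ball c r ⊆ S :=
    image_dilation_ball_subset_closedBall hM hM0.le ht (mem_closedBall_zero_iff.1 (hR hc)) hr1
  calc τ (ball c r) ≤ ENNReal.ofReal (2 * M * r / ‖c₀‖) * τ S :=
        hτ.measure_ball_le ha hw hM0 hM (by positivity) hsep hS
    _ = ENNReal.ofReal (2 * M * (τ S).toReal / ‖c₀‖ * r) := by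
        rw [← ENNReal.ofReal_toReal hSfin, ← ENNReal.ofReal_mul (by positivity),
          ENNReal.toReal_ofReal ENNReal.toReal_nonneg]
        ring_nf
    _ ≤ ENNReal.ofReal ((2 * M * (τ S).toReal / ‖c₀‖ + 1) * r) := by
        gcongr
        linarith

end Dilation

/-- A regular Borel measure on ℝⁿ which is homogeneous of degree `a > 0`
with respect to a system of dilations `ε_t` (with weights `w i ≥ 1`) is locally
1-bounded on ℝⁿ \ {0}. -/
theorem stmt0 {n : ℕ} (τ : Measure (EuclideanSpace ℝ (Fin n))) [τ.Regular]
    (w : Fin n → ℝ) (hw : ∀ i, 1 ≤ w i) (a : ℝ) (ha : 0 < a)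
    (hhom : ∀ A : Set (EuclideanSpace ℝ (Fin n)), MeasurableSet A → ∀ t : ℝ, 0 < t →
      τ ((fun x : EuclideanSpace ℝ (Fin n) =>
            (WithLp.toLp 2 (fun i => t ^ (w i) * x i) : EuclideanSpace ℝ (Fin n))) '' A)
        = ENNReal.ofReal (t ^ a) * τ A) :
    ∀ K : Set (EuclideanSpace ℝ (Fin n)), IsCompact K → K ⊆ {0}ᶜ →
      ∀ γ : ℝ, 0 ≤ γ → γ < 1 →
        ∃ C : ℝ, 0 < C ∧ ∃ r₀ : ℝ, 0 < r₀ ∧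
          ∀ lam ∈ K, ∀ r : ℝ, 0 < r → r ≤ r₀ →
            τ (Metric.ball lam r) ≤ ENNReal.ofReal (C * r ^ γ) := by
  intro K hK hK0 γ _ hγ1
  obtain ⟨C, hC, hball⟩ := IsHomogeneous.exists_measure_ball_le hhom ha.le hw hK hK0
  refine ⟨C, hC, 1, one_pos, fun c hc r hr hr1 => (hball c hc r hr hr1).trans ?_⟩
  have hrγ : r ≤ r ^ γ := by
    simpa using Real.rpow_le_rpow_of_exponent_ge hr hr1 hγ1.le
  gcongr
end

section
/- Let 𝔤 be a nilpotent Lie algebra whose capacity map J satisfies the Métivier condition |J(x̄,τ)| ≥ |x̄||τ| for all x̄ ∈ 𝔤/𝔷 and τ ∈ 𝔷* (with respect to some norms). Then 𝔤 is 2-step with 𝔷 = [𝔤,𝔤], and dim(𝔤/𝔷) ≥ dim 𝔷. -/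
/-!
Take `τ ∈ 𝔷*` nonzero, which exists since the center of a nilpotent Lie algebra is nontrivial.
For `y ∈ 𝔶` the Jacobi identity gives `[[g, c], y] = 0`, so `J(P[g, c], τ) = 0` and injectivity
of `J(·, τ)` makes every bracket central. For `x ∉ 𝔷`, a functional `τ` vanishing on the range
of `ad x` satisfies `J(P x, τ) = 0`, so injectivity of `J(P x, ·)` forces `τ` to vanish on `𝔷`:
thus `𝔷 ⊆ [x, 𝔤]`. Since `ad x` kills `𝔷`, it factors through `𝔤/𝔷`, which gives both
`𝔷 = [𝔤, 𝔤]` and `dim 𝔷 ≤ dim (𝔤/𝔷)`.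
-/

open LieAlgebra LieModule Module

theorem LinearMap.finrank_range_le_finrank_quotient {K V W : Type*} [Field K] [AddCommGroup V]
    [Module K V] [AddCommGroup W] [Module K W] [Module.Finite K V] (f : V →ₗ[K] W)
    {p : Submodule K V} (hp : p ≤ LinearMap.ker f) :
    finrank K (LinearMap.range f) ≤ finrank K (V ⧸ p) := by
  rw [← p.range_liftQ f hp]
  exact LinearMap.finrank_range_le _

section CapacityMap

variable {R L : Type*} [CommRing R] [LieRing L] [LieAlgebra R L]

theorem lie_lie_eq_zero_of_forall_lie_mem_center {y : L} (hy : ∀ g, ⁅y, g⁆ ∈ center R L)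
    (g c : L) : ⁅⁅g, c⁆, y⁆ = 0 := by
  have hcy : ⁅c, y⁆ ∈ center R L := by rw [← lie_skew]; exact neg_mem (hy c)
  have hgy : ⁅g, y⁆ ∈ center R L := by rw [← lie_skew]; exact neg_mem (hy g)
  rw [lie_lie, (mem_maxTrivSubmodule R L L _).mp hcy g, (mem_maxTrivSubmodule R L L _).mp hgy c,
    sub_zero]

theorem lie_mem_center_of_capacity_injective (τ : L →ₗ[R] R)
    (hτ : ∀ x : L, (∀ y : L, (∀ g : L, ⁅y, g⁆ ∈ center R L) → τ ⁅x, y⁆ = 0) → x ∈ center R L)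
    (g c : L) : ⁅g, c⁆ ∈ center R L :=
  hτ _ fun y hy => by rw [lie_lie_eq_zero_of_forall_lie_mem_center hy, map_zero]

theorem lowerCentralSeries_two_eq_bot_of_lie_mem_center (h : ∀ g c : L, ⁅g, c⁆ ∈ center R L) :
    lowerCentralSeries R L L 2 = ⊥ := by
  rw [lowerCentralSeries_succ, LieSubmodule.lie_eq_bot_iff]
  intro g _ m hm
  rw [lowerCentralSeries_succ, lowerCentralSeries_zero] at hm
  exact (mem_maxTrivSubmodule R L L m).mp
    (((LieSubmodule.lie_le_iff _ _ _).mpr fun g _ c _ => h g c) hm) g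

end CapacityMap

section CapacityMapField

variable {K L : Type*} [Field K] [LieRing L] [LieAlgebra K L]

theorem center_le_range_ad_of_capacity_injective {x : L}
    (hx : ∀ τ : L →ₗ[K] K, (∀ y : L, (∀ g : L, ⁅y, g⁆ ∈ center K L) → τ ⁅x, y⁆ = 0) →
      ∀ z ∈ center K L, τ z = 0) :
    (center K L).toSubmodule ≤ LinearMap.range (ad K L x) := by
  intro z hz
  by_contra hzx
  obtain ⟨τ, hτz, hτ⟩ := Submodule.exists_le_ker_of_notMem hzx
  exact hτz (hx τ (fun y _ => hτ ⟨y, rfl⟩) z hz)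

theorem finrank_center_le_finrank_quotient_of_le_range_ad [Module.Finite K L] {x : L}
    (hx : (center K L).toSubmodule ≤ LinearMap.range (ad K L x)) :
    finrank K (center K L) ≤ finrank K (L ⧸ (center K L).toSubmodule) :=
  (Submodule.finrank_mono hx).trans <| (ad K L x).finrank_range_le_finrank_quotient
    fun z hz => (mem_maxTrivSubmodule K L L z).mp hz x

end CapacityMapField

/-- If the capacity map `J` of a (nonabelian, finite-dimensional) nilpotent
Lie algebra `𝔤` satisfies the Métivier condition — i.e. `J(·,τ)` is injective for every
`τ ≠ 0` in `𝔷*` and `J(x̄,·)` is injective for every `x̄ ≠ 0` in `𝔤/𝔷` — then `𝔤` is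
2-step with `𝔷 = [𝔤,𝔤]`, and `dim(𝔤/𝔷) ≥ dim 𝔷`.  Here `J(P(x),τ)(y) = τ([x,y])`
for `y ∈ 𝔶 = {v : [v,𝔤] ⊆ 𝔷}`, and functionals on `𝔷` are represented by their
extensions to `𝔤`. -/
theorem stmt6 (L : Type*) [LieRing L] [LieAlgebra ℝ L] [Module.Finite ℝ L]
    [LieRing.IsNilpotent L]
    (hnab : LieAlgebra.center ℝ L ≠ ⊤)
    (H1 : ∀ τ : L →ₗ[ℝ] ℝ, (∃ z ∈ LieAlgebra.center ℝ L, τ z ≠ 0) →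
      ∀ x : L, (∀ y : L, (∀ g : L, ⁅y, g⁆ ∈ LieAlgebra.center ℝ L) → τ ⁅x, y⁆ = 0) →
        x ∈ LieAlgebra.center ℝ L)
    (H2 : ∀ x : L, x ∉ LieAlgebra.center ℝ L →
      ∀ τ : L →ₗ[ℝ] ℝ, (∀ y : L, (∀ g : L, ⁅y, g⁆ ∈ LieAlgebra.center ℝ L) → τ ⁅x, y⁆ = 0) →
        ∀ z ∈ LieAlgebra.center ℝ L, τ z = 0) :
    ⁅(⊤ : LieIdeal ℝ L), (⊤ : LieIdeal ℝ L)⁆ = LieAlgebra.center ℝ L ∧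
    LieModule.lowerCentralSeries ℝ L L 2 = ⊥ ∧
    Module.finrank ℝ ↥(LieAlgebra.center ℝ L)
      ≤ Module.finrank ℝ (L ⧸ (LieAlgebra.center ℝ L).toSubmodule) := by
  obtain ⟨x₀, -, hx₀⟩ := SetLike.exists_of_lt hnab.lt_top
  have : Nontrivial L := nontrivial_of_ne x₀ 0 fun h => hx₀ (h ▸ zero_mem _)
  have := non_trivial_center_of_isNilpotent (R := ℝ) (L := L)
  obtain ⟨z₀, hz₀⟩ := exists_ne (0 : center ℝ L)
  obtain ⟨τ₀, hτ₀, -⟩ := Submodule.exists_le_ker_of_notMem (p := (⊥ : Submodule ℝ L)) (v := z₀)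
    (by simpa using hz₀)
  have hcomm := lie_mem_center_of_capacity_injective τ₀ (H1 τ₀ ⟨z₀, z₀.2, hτ₀⟩)
  have hrange := center_le_range_ad_of_capacity_injective (H2 x₀ hx₀)
  refine ⟨le_antisymm ((LieSubmodule.lie_le_iff _ _ _).mpr fun g _ c _ => hcomm g c) ?_,
    lowerCentralSeries_two_eq_bot_of_lie_mem_center hcomm,
    finrank_center_le_finrank_quotient_of_le_range_ad hrange⟩
  intro z hz
  obtain ⟨g, rfl⟩ := hrange hz
  exact LieSubmodule.lie_mem_lie trivial trivial
end

section
/- If G is h-capacious, with ω₁,...,ω_h ∈ (𝔤/𝔷)* and z₁,...,z_h ∈ 𝔷 as in the definition, then the functionals ω_j ∘ P vanish on [𝔤,𝔤]; consequently h ≤ min{dim 𝔷, dim 𝔤 − dim(𝔷 + [𝔤,𝔤])}. -/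
/-!
An element `y` all of whose brackets are central commutes with the derived algebra, by the Jacobi
identity. Hence for `x ∈ [𝔤, 𝔤]` the capacity bound reads `|ω_j(x)| |τ(z_j)| ≤ 0`, and choosing `τ`
with `τ(z_j) ≠ 0` forces `ω_j(x) = 0`. The `z_j` are independent in `𝔷`, and the `ω_j` are
independent in the annihilator of `𝔷 + [𝔤, 𝔤]`, which gives the two dimension bounds.
-/

open Module

theorem LieAlgebra.lie_eq_zero_of_mem_commutator {R L : Type*} [CommRing R] [LieRing L]
    [LieAlgebra R L] {y : L} (hy : ∀ g : L, ⁅y, g⁆ ∈ center R L) {x : L}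
    (hx : x ∈ ⁅(⊤ : LieIdeal R L), (⊤ : LieIdeal R L)⁆) : ⁅x, y⁆ = 0 := by
  suffices hle : (⁅(⊤ : LieIdeal R L), (⊤ : LieIdeal R L)⁆ : LieIdeal R L).toSubmodule ≤
      LinearMap.ker (ad R L y) by
    rw [← lie_skew, show ⁅y, x⁆ = 0 from hle hx, neg_zero]
  rw [LieSubmodule.lieIdeal_oper_eq_linear_span', Submodule.span_le]
  rintro _ ⟨a, -, b, -, rfl⟩
  have hya : ⁅⁅y, a⁆, b⁆ = 0 := by rw [← lie_skew, hy a b, neg_zero]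
  have hyb : ⁅a, ⁅y, b⁆⁆ = 0 := hy b a
  simp only [SetLike.mem_coe, LinearMap.mem_ker, ad_apply, leibniz_lie, hya, hyb, add_zero]

theorem LinearIndependent.card_le_finrank_of_forall_mem {K V ι : Type*} [Field K]
    [AddCommGroup V] [Module K V] [FiniteDimensional K V] [Fintype ι] {p : Submodule K V}
    {v : ι → V} (hv : LinearIndependent K v) (hp : ∀ i, v i ∈ p) :
    Fintype.card ι ≤ finrank K p := by
  rw [← finrank_span_eq_card hv]
  exact Submodule.finrank_mono (Submodule.span_le.2 (Set.range_subset_iff.2 hp))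

theorem apply_eq_zero_of_mem_commutator_of_capacity_bound {K L : Type*} [Field K] [LinearOrder K]
    [IsStrictOrderedRing K] [LieRing L] [LieAlgebra K L] {ω : Dual K L} {z : L} (hz : z ≠ 0)
    {x : L} (hx : x ∈ ⁅(⊤ : LieIdeal K L), (⊤ : LieIdeal K L)⁆)
    (hbound : ∀ τ : Dual K L, ∃ y : L, (∀ g : L, ⁅y, g⁆ ∈ LieAlgebra.center K L) ∧
      |ω x| * |τ z| ≤ |τ ⁅x, y⁆|) :
    ω x = 0 := by
  obtain ⟨τ, hτ⟩ := Projective.exists_dual_ne_zero K hz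
  obtain ⟨y, hy, hle⟩ := hbound τ
  rw [LieAlgebra.lie_eq_zero_of_mem_commutator hy hx, map_zero, abs_zero] at hle
  exact abs_nonpos_iff.1 (nonpos_of_mul_nonpos_left hle (abs_pos.2 hτ))

theorem stmt9_general (L : Type*) [LieRing L] [LieAlgebra ℝ L] [Module.Finite ℝ L]
    (h : ℕ) (N : L → ℝ)
    (ω : Fin h → (L →ₗ[ℝ] ℝ)) (z : Fin h → L)
    (hω_indep : LinearIndependent ℝ ω) (hz_indep : LinearIndependent ℝ z)
    (hω_cent : ∀ j, ∀ c ∈ LieAlgebra.center ℝ L, ω j c = 0)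
    (hz_cent : ∀ j, z j ∈ LieAlgebra.center ℝ L)
    (hJ : ∀ j, ∀ x : L, ∀ τ : L →ₗ[ℝ] ℝ,
      ∃ y : L, (∀ g : L, ⁅y, g⁆ ∈ LieAlgebra.center ℝ L) ∧ N y ≤ 1 ∧
        |ω j x| * |τ (z j)| ≤ |τ ⁅x, y⁆|) :
    (∀ j, ∀ x ∈ ⁅(⊤ : LieIdeal ℝ L), (⊤ : LieIdeal ℝ L)⁆, ω j x = 0) ∧
    h ≤ Module.finrank ℝ ↥(LieAlgebra.center ℝ L) ∧
    h + Module.finrank ℝ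
        ↥((LieAlgebra.center ℝ L).toSubmodule
            ⊔ (⁅(⊤ : LieIdeal ℝ L), (⊤ : LieIdeal ℝ L)⁆ : LieIdeal ℝ L).toSubmodule)
      ≤ Module.finrank ℝ L := by
  have hω_comm : ∀ j, ∀ x ∈ ⁅(⊤ : LieIdeal ℝ L), (⊤ : LieIdeal ℝ L)⁆, ω j x = 0 :=
    fun j x hx ↦ apply_eq_zero_of_mem_commutator_of_capacity_bound (hz_indep.ne_zero j) hx
      fun τ ↦ let ⟨y, hy, _, hle⟩ := hJ j x τ; ⟨y, hy, hle⟩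
  have hz_card := hz_indep.card_le_finrank_of_forall_mem hz_cent
  rw [Fintype.card_fin] at hz_card
  refine ⟨hω_comm, hz_card, ?_⟩
  set W : Submodule ℝ L := (LieAlgebra.center ℝ L).toSubmodule
    ⊔ (⁅(⊤ : LieIdeal ℝ L), (⊤ : LieIdeal ℝ L)⁆ : LieIdeal ℝ L).toSubmodule
  have hω_ann : ∀ j, ω j ∈ W.dualAnnihilator := fun j ↦
    (Submodule.mem_dualAnnihilator _).2 fun _ hw ↦
      (sup_le (c := LinearMap.ker (ω j)) (hω_cent j) (hω_comm j)) hw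
  have hω_card := hω_indep.card_le_finrank_of_forall_mem hω_ann
  rw [Fintype.card_fin] at hω_card
  -- `hω_card` sees `W.dualAnnihilator` through `L →ₗ[ℝ] ℝ`, the library lemma through `Dual ℝ L`:
  -- the two `finrank`s agree only up to unfolding, so `omega` cannot combine them.
  calc h + finrank ℝ W ≤ finrank ℝ W.dualAnnihilator + finrank ℝ W :=
        Nat.add_le_add_right hω_card _
    _ = finrank ℝ L := by
        rw [add_comm]; exact Subspace.finrank_add_finrank_dualAnnihilator_eq W

/-- If `G` is `h`-capacious — i.e. there are linearly independent
homogeneous `ω₁,…,ω_h ∈ (𝔤/𝔷)*` (encoded as functionals on `𝔤` vanishing on the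
center) and linearly independent homogeneous `z₁,…,z_h ∈ 𝔷` such that
`|J(x̄,τ)| ≥ |ω_j(x̄)||τ(z_j)|` for all `x̄,τ` (the dual norm `|J(x̄,τ)|` being
witnessed by some `y ∈ 𝔶` with `N y ≤ 1`) — then each `ω_j ∘ P` vanishes on
`[𝔤,𝔤]`, and consequently `h ≤ min{dim 𝔷, dim 𝔤 − dim(𝔷 + [𝔤,𝔤])}`. -/
theorem stmt9 (L : Type*) [LieRing L] [LieAlgebra ℝ L] [Module.Finite ℝ L]
    (δ : ℝ → (L ≃ₗ⁅ℝ⁆ L)) (h : ℕ) (N : L → ℝ) (hN : ∀ v, 0 ≤ N v)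
    (ω : Fin h → (L →ₗ[ℝ] ℝ)) (z : Fin h → L)
    (hω_indep : LinearIndependent ℝ ω) (hz_indep : LinearIndependent ℝ z)
    (hω_cent : ∀ j, ∀ c ∈ LieAlgebra.center ℝ L, ω j c = 0)
    (hz_cent : ∀ j, z j ∈ LieAlgebra.center ℝ L)
    (hω_hom : ∀ j, ∃ d : ℝ, ∀ t : ℝ, 0 < t → ∀ v : L, ω j (δ t v) = t ^ d * ω j v)
    (hz_hom : ∀ j, ∃ d : ℝ, ∀ t : ℝ, 0 < t → δ t (z j) = t ^ d • z j)
    (hJ : ∀ j, ∀ x : L, ∀ τ : L →ₗ[ℝ] ℝ,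
      ∃ y : L, (∀ g : L, ⁅y, g⁆ ∈ LieAlgebra.center ℝ L) ∧ N y ≤ 1 ∧
        |ω j x| * |τ (z j)| ≤ |τ ⁅x, y⁆|) :
    (∀ j, ∀ x ∈ ⁅(⊤ : LieIdeal ℝ L), (⊤ : LieIdeal ℝ L)⁆, ω j x = 0) ∧
    h ≤ Module.finrank ℝ ↥(LieAlgebra.center ℝ L) ∧
    h + Module.finrank ℝ
        ↥((LieAlgebra.center ℝ L).toSubmodule
            ⊔ (⁅(⊤ : LieIdeal ℝ L), (⊤ : LieIdeal ℝ L)⁆ : LieIdeal ℝ L).toSubmodule)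
      ≤ Module.finrank ℝ L :=
  stmt9_general L h N ω z hω_indep hz_indep hω_cent hz_cent hJ
end
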